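/- Let G be a finite group with subgroups H and K such that: H has a minimal logarithmic signature; K acts transitively on the coset space G/H (i.e., G = KH); and K has a minimal logarithmic signature whose first block is the subgroup K ∩ H. Then G has a minimal logarithmic signature. -/

import Mathlib

/-- `A` is a logarithmic signature for the group `G`. -/
def IsLogSig {G : Type*} [Group G] {s : ℕ} (A : Fin s → Finset G) : Prop :=
  ∀ g : G, ∃! t : Fin s → G, (∀ i, t i ∈ A i) ∧ (List.ofFn t).prod = g

/-- The minimal possible length `∑ β_j p_j` for a logarithmic signature of a
group of order `m = ∏ p_j ^ β_j`. -/
def minLSLength (m : ℕ) : ℕ := m.factorization.sum fun p β => β * p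

/-- `G` has a minimal logarithmic signature. -/
def HasMLS (G : Type*) [Group G] [Finite G] : Prop :=
  ∃ s : ℕ, ∃ A : Fin s → Finset G,
    IsLogSig A ∧ ∑ i, (A i).card = minLSLength (Nat.card G)

/-!
Write `T` for the set of products of tuples from the blocks `B₂, …, B_s` of the signature of
`K`.
Since `K = (K ∩ H) · T` with unique factorization and `G = HK`, every element of `G` factors
uniquely as `h t` with `h ∈ H`, `t ∈ T`; replacing the factor `H` by an MLS of `H`
gives a logarithmic signature of `G`. Its length is `ℓ(|H|) + ℓ([K : K ∩ H])`, which is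
`ℓ(|G|)` because `ℓ` is additive on products and `[K : K ∩ H] = [G : H]` by orbit–stabilizer
for the transitive action of `K` on `G/H`.
-/

open Set Function
open scoped Pointwise

theorem minLSLength_mul {m n : ℕ} (hm : m ≠ 0) (hn : n ≠ 0) :
    minLSLength (m * n) = minLSLength m + minLSLength n := by
  unfold minLSLength
  rw [Nat.factorization_mul hm hn, Finsupp.sum_add_index']
  · simp
  · exact fun p β γ => add_mul β γ p

theorem Subgroup.relIndex_eq_index_of_forall_exists_mul {G : Type*} [Group G] {H K : Subgroup G}
    (hKH : ∀ g : G, ∃ k ∈ K, ∃ h ∈ H, g = k * h) : H.relIndex K = H.index := by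
  have hsmul (k : K) (g : G) : k • (g : G ⧸ H) = ((k * g : G) : G ⧸ H) := rfl
  have : MulAction.IsPretransitive K (G ⧸ H) := by
    rw [MulAction.isPretransitive_iff_base ((1 : G) : G ⧸ H)]
    rintro ⟨g⟩
    obtain ⟨k, hk, h, hh, rfl⟩ := hKH g
    refine ⟨⟨k, hk⟩, ?_⟩
    rw [hsmul, mul_one]
    exact QuotientGroup.eq.2 (by simpa using hh)
  have hstab : MulAction.stabilizer K ((1 : G) : G ⧸ H) = H.subgroupOf K := by
    ext k
    rw [MulAction.mem_stabilizer_iff, hsmul, mul_one, QuotientGroup.eq, Subgroup.mem_subgroupOf]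
    simp
  rw [Subgroup.relIndex, ← hstab, MulAction.index_stabilizer_of_transitive, Subgroup.index]

theorem Fin.image_appendEquiv_prod_pi {α : Type*} {m n : ℕ} (A : Fin m → Set α)
    (B : Fin n → Set α) :
    Fin.appendEquiv m n '' (univ.pi A ×ˢ univ.pi B) = univ.pi (Fin.append A B) := by
  ext t
  simp [Equiv.image_eq_preimage_symm, Fin.forall_fin_add]

theorem Fin.image_consEquiv_prod_pi {α : Type*} {n : ℕ} (X : Set α) (B : Fin n → Set α) :
    Fin.consEquiv (fun _ => α) '' (X ×ˢ univ.pi B) = univ.pi (Fin.cons X B) := by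
  ext t
  simp [Equiv.image_eq_preimage_symm, Fin.forall_fin_succ, Fin.tail]

section LogSig

variable {G : Type*} [Group G]

/-- A logarithmic signature of the subset `S`; its blocks are sets, so that a block may be a
subgroup such as `H ∩ K`. -/
def IsLogSigOn (S : Set G) {s : ℕ} (A : Fin s → Set G) : Prop :=
  BijOn (fun t : Fin s → G => (List.ofFn t).prod) (univ.pi A) S

theorem isLogSig_iff_isLogSigOn_univ {s : ℕ} {A : Fin s → Finset G} :
    IsLogSig A ↔ IsLogSigOn univ (fun i => (A i : Set G)) := by
  refine ⟨fun h => ⟨mapsTo_univ _ _, ?_, ?_⟩, fun h g => ?_⟩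
  · intro t ht t' ht' htt'
    exact (h _).unique ⟨mem_univ_pi.1 ht, htt'⟩ ⟨mem_univ_pi.1 ht', rfl⟩
  · intro g _
    obtain ⟨t, ⟨ht, rfl⟩, -⟩ := h g
    exact ⟨t, mem_univ_pi.2 ht, rfl⟩
  · obtain ⟨t, ht, rfl⟩ := h.surjOn (mem_univ g)
    exact ⟨t, ⟨mem_univ_pi.1 ht, rfl⟩, fun t' ht' => h.injOn (mem_univ_pi.2 ht'.1) ht ht'.2⟩

theorem IsLogSigOn.image {G' : Type*} [Group G'] {f : G →* G'} (hf : Injective f)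
    {S : Set G} {s : ℕ} {A : Fin s → Set G} (h : IsLogSigOn S A) :
    IsLogSigOn (f '' S) (fun i => f '' A i) := by
  rw [IsLogSigOn, ← piMap_image_univ_pi, ← bijOn_comp_iff (Injective.piMap fun _ => hf).injOn]
  convert hf.injOn.bijOn_image.comp h using 1
  ext t
  simp only [comp_apply, map_list_prod, List.map_ofFn]
  rfl

theorem IsLogSig.isLogSigOn_subtype {K : Subgroup G} {s : ℕ} {A : Fin s → Finset K}
    (h : IsLogSig A) : IsLogSigOn (K : Set G) fun i => Subtype.val '' (A i : Set K) := by
  simpa using (isLogSig_iff_isLogSigOn_univ.1 h).image K.subtype_injective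

theorem IsLogSig.isLogSigOn_cons_inter {H K : Subgroup G} {s : ℕ} {B : Fin (s + 1) → Finset K}
    (hB : IsLogSig B) (hB0 : (B 0 : Set K) = H.subgroupOf K) :
    IsLogSigOn (K : Set G)
      (Fin.cons ((H : Set G) ∩ K) fun i => Subtype.val '' (B i.succ : Set K)) := by
  have h := hB.isLogSigOn_subtype
  rwa [← Fin.cons_self_tail fun i => Subtype.val '' (B i : Set K), Fin.tail_def, hB0,
    ← K.coe_subtype, ← Subgroup.coe_map, Subgroup.subgroupOf_map_subtype, Subgroup.coe_inf] at h

theorem isLogSigOn_cons_iff {S X : Set G} {s : ℕ} {B : Fin s → Set G} :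
    IsLogSigOn S (Fin.cons X B) ↔
      BijOn (fun p : G × (Fin s → G) => p.1 * (List.ofFn p.2).prod) (X ×ˢ univ.pi B) S := by
  rw [IsLogSigOn, ← Fin.image_consEquiv_prod_pi, ← bijOn_comp_iff (Equiv.injective _).injOn]
  simp [Function.comp_def]

theorem IsLogSigOn.append {S T : Set G} {r s : ℕ} {A : Fin r → Set G} {B : Fin s → Set G}
    (hA : IsLogSigOn S A) (hSB : IsLogSigOn T (Fin.cons S B)) :
    IsLogSigOn T (Fin.append A B) := by
  rw [isLogSigOn_cons_iff] at hSB
  rw [IsLogSigOn, ← Fin.image_appendEquiv_prod_pi, ← bijOn_comp_iff (Equiv.injective _).injOn]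
  convert hSB.comp (hA.prodMap (bijOn_id _)) using 1
  ext ⟨t, u⟩
  change (List.ofFn (Fin.append t u)).prod = _
  rw [List.ofFn_fin_append, List.prod_append]
  rfl

theorem IsLogSigOn.cons_mul_of_cons_inter {H K : Subgroup G} {s : ℕ} {B : Fin s → Set G}
    (h : IsLogSigOn K (Fin.cons ((H : Set G) ∩ K) B)) :
    IsLogSigOn ((H : Set G) * (K : Set G)) (Fin.cons (H : Set G) B) := by
  rw [isLogSigOn_cons_iff] at h ⊢
  have hprod_mem : ∀ u ∈ univ.pi B, (List.ofFn u).prod ∈ K := fun u hu => by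
    simpa using h.mapsTo (mk_mem_prod ⟨H.one_mem, K.one_mem⟩ hu)
  refine ⟨?_, ?_, ?_⟩
  · rintro ⟨x, u⟩ ⟨hx, hu⟩
    exact mul_mem_mul hx (hprod_mem u hu)
  · -- `(x₂⁻¹ x₁, u₁)` and `(1, u₂)` are two factorizations of the same element of `K`.
    rintro ⟨x₁, u₁⟩ ⟨hx₁, hu₁⟩ ⟨x₂, u₂⟩ ⟨hx₂, hu₂⟩
      (heq : x₁ * _ = x₂ * _)
    have hy : x₂⁻¹ * x₁ ∈ (H : Set G) ∩ K := by
      refine ⟨H.mul_mem (H.inv_mem hx₂) hx₁, ?_⟩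
      rw [show x₂⁻¹ * x₁ = (List.ofFn u₂).prod * (List.ofFn u₁).prod⁻¹ by
        rw [inv_mul_eq_iff_eq_mul, ← mul_assoc, eq_mul_inv_iff_mul_eq, heq]]
      exact K.mul_mem (hprod_mem u₂ hu₂) (K.inv_mem (hprod_mem u₁ hu₁))
    have := h.injOn (mk_mem_prod hy hu₁) (mk_mem_prod ⟨H.one_mem, K.one_mem⟩ hu₂)
      (by simp [mul_assoc, heq])
    obtain ⟨hx, rfl⟩ := Prod.ext_iff.1 this
    rw [inv_mul_eq_one.1 hx]
  · rintro _ ⟨x, hx, k, hk, rfl⟩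
    obtain ⟨⟨y, u⟩, ⟨hy, hu⟩, rfl⟩ := h.surjOn hk
    exact ⟨(x * y, u), ⟨H.mul_mem hx hy.1, hu⟩, mul_assoc _ _ _⟩

end LogSig

/-- Holmes's Condition 2.4: if `H` has an MLS, `K` acts transitively on the
cosets of `H` (that is, `G = KH`), and `K` has an MLS whose first block is the
subgroup `K ∩ H` (the remaining blocks having total length
`minLSLength [K : K ∩ H]`), then `G` has an MLS. -/
theorem hasMLS_of_holmes_condition
    (G : Type*) [Group G] [Finite G] (H K : Subgroup G)
    (hH : HasMLS H)
    (htrans : ∀ g : G, ∃ k ∈ K, ∃ h ∈ H, g = k * h)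
    (hK : ∃ s : ℕ, ∃ B : Fin (s + 1) → Finset K,
      IsLogSig B ∧
      (↑(B 0) : Set K) = ((H.subgroupOf K : Subgroup K) : Set K) ∧
      ∑ i : Fin s, (B i.succ).card = minLSLength (H.subgroupOf K).index) :
    HasMLS G := by
  obtain ⟨r, A, hA, hAcard⟩ := hH
  obtain ⟨s, B, hB, hB0, hBcard⟩ := hK
  have hHK : (H : Set G) * (K : Set G) = univ := eq_univ_of_forall fun g => by
    obtain ⟨k, hk, h, hh, hg⟩ := htrans g⁻¹
    exact ⟨h⁻¹, H.inv_mem hh, k⁻¹, K.inv_mem hk, by rw [← inv_inv g, hg, mul_inv_rev]⟩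
  let C : Fin (r + s) → Finset G := Fin.append (fun i => (A i).map (Embedding.subtype _))
    fun i => (B i.succ).map (Embedding.subtype _)
  have hC : IsLogSig C := by
    rw [isLogSig_iff_isLogSigOn_univ]
    have hGK := (hB.isLogSigOn_cons_inter hB0).cons_mul_of_cons_inter
    rw [hHK] at hGK
    convert hA.isLogSigOn_subtype.append hGK using 1
    funext i
    cases i using Fin.addCases <;> simp [C]
  have hcard : Nat.card G = Nat.card H * (H.subgroupOf K).index := by
    rw [← Subgroup.relIndex, Subgroup.relIndex_eq_index_of_forall_exists_mul htrans,
      H.card_mul_index]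
  refine ⟨r + s, C, hC, ?_⟩
  rw [hcard, minLSLength_mul Nat.card_pos.ne' Subgroup.index_ne_zero_of_finite, ← hAcard,
    ← hBcard]
  simp [C, Fin.sum_univ_add]
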